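/- Let b : ℤ → ℚ with b(n) ≠ 0 for all n satisfy the lens recurrence b(n+1) = α·b(n) − b(n−1) + β for all n ∈ ℤ, together with the compatibility condition b(n₀)² + b(n₀+1)² = α·b(n₀)·b(n₀+1) + β·(b(n₀) + b(n₀+1)) at some index n₀. Then b satisfies the nonlinear four-step recurrence: for all n ∈ ℤ, b(n−1)·b(n+2) = (b(n) − β)·(b(n+1) − β). -/

import Mathlib

/-! The quantity `x² + y² - α x y - β (x + y)` is invariant under the step
`(x, y) ↦ (y, α y - x + β)` of the lens recurrence, so the compatibility condition at one
index propagates to every index. Where it vanishes, solving the recurrence for both neighbours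
of `(b n, b (n + 1))` turns the four-step relation into a multiple of the invariant. -/

section LensDefect

variable {R : Type*} [CommRing R] (α β : R)

def lensDefect (x y : R) : R :=
  x ^ 2 + y ^ 2 - α * x * y - β * (x + y)

theorem lensDefect_step (x y : R) :
    lensDefect α β y (α * y - x + β) = lensDefect α β x y := by
  unfold lensDefect
  ring

theorem mul_eq_sub_mul_sub_of_lensDefect_eq_zero {x y : R} (h : lensDefect α β x y = 0) :
    (α * x - y + β) * (α * y - x + β) = (x - β) * (y - β) := by
  unfold lensDefect at h
  linear_combination (-α) * h

theorem lensDefect_eq_of_recurrence {b : ℤ → R}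
    (hrec : ∀ n : ℤ, b (n + 1) = α * b n - b (n - 1) + β) (m n : ℤ) :
    lensDefect α β (b m) (b (m + 1)) = lensDefect α β (b n) (b (n + 1)) := by
  have hper : Function.Periodic (fun k : ℤ ↦ lensDefect α β (b k) (b (k + 1))) 1 := by
    intro k
    simp only [hrec (k + 1), add_sub_cancel_right]
    exact lensDefect_step α β _ _
  simpa using (hper.int_mul_eq m).trans (hper.int_mul_eq n).symm

end LensDefect

theorem lens_recurrence_nonlinear_four_step_general
    (b : ℤ → ℚ) (α β : ℚ)
    (hrec : ∀ n : ℤ, b (n + 1) = α * b n - b (n - 1) + β)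
    (n₀ : ℤ)
    (hcomp : (b n₀) ^ 2 + (b (n₀ + 1)) ^ 2
      = α * b n₀ * b (n₀ + 1) + β * (b n₀ + b (n₀ + 1))) :
    ∀ n : ℤ, b (n - 1) * b (n + 2) = (b n - β) * (b (n + 1) - β) := by
  intro n
  have hdefect : lensDefect α β (b n) (b (n + 1)) = 0 := by
    rw [lensDefect_eq_of_recurrence α β hrec n n₀, lensDefect, hcomp]
    ring
  have hprev : b (n - 1) = α * b n - b (n + 1) + β := by linear_combination hrec n
  have hnext : b (n + 2) = α * b (n + 1) - b n + β := by
    simpa [add_assoc, one_add_one_eq_two] using hrec (n + 1)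
  rw [hprev, hnext]
  exact mul_eq_sub_mul_sub_of_lensDefect_eq_zero α β hdefect

/-- A nowhere-vanishing lens sequence with the compatibility condition at
some index satisfies the nonlinear four-step recurrence
`b (n-1) * b (n+2) = (b n - β) * (b (n+1) - β)`. -/
theorem lens_recurrence_nonlinear_four_step
    (b : ℤ → ℚ) (α β : ℚ) (hb : ∀ n : ℤ, b n ≠ 0)
    (hrec : ∀ n : ℤ, b (n + 1) = α * b n - b (n - 1) + β)
    (n₀ : ℤ)
    (hcomp : (b n₀) ^ 2 + (b (n₀ + 1)) ^ 2
      = α * b n₀ * b (n₀ + 1) + β * (b n₀ + b (n₀ + 1))) :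
    ∀ n : ℤ, b (n - 1) * b (n + 2) = (b n - β) * (b (n + 1) - β) :=
  lens_recurrence_nonlinear_four_step_general b α β hrec n₀ hcomp
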